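/- Let s be nonzero in a field K, q = s^2, and let x be nonzero such that all denominators below are nonzero (in particular x^2 ≠ 1, x ≠ s^{±1}, s x ≠ 1). Define ω(y) = y(1 + s y)/(s(1 - y^2)(1 - s y)), (M f)(x) = (1/(x - 1/x))·( -( (1+x)^2 / x )·f(s x) + x (1 + 1/x)^2 · f(x/s) ), and (L g)(x) = (g(s x) - g(x/s))/(x - 1/x). Then for every function f: K* → K and every admissible x: ω(x)·(f(q x) - f(x)) + ω(1/x)·(f(x/q) - f(x)) = -s^{-1} · (L (M f))(x). -/

import Mathlib

/-- weight function of the genus-two skein algebra difference operators -/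
def skeinOmega {K : Type*} [Field K] (s y : K) : K :=
  y * (1 + s * y) / (s * (1 - y ^ 2) * (1 - s * y))

/-- Kalnins–Miller parameter-shift operator `m̂^{(-q^{1/2},-q^{1/2},cq^{-1},dq^{-1})}` -/
def Mop {K : Type*} [Field K] (s : K) (f : K → K) (y : K) : K :=
  (1 / (y - 1 / y)) * (-((1 + y) ^ 2 / y) * f (s * y) + y * (1 + 1 / y) ^ 2 * f (y / s))

lemma Mop_eq {K : Type*} [Field K] (s : K) (f : K → K) (y : K) (hy : y ≠ 0)
    (hy2 : y ^ 2 ≠ 1) : Mop s f y = (1 + y) * (f (y / s) - f (s * y)) / (y - 1) := by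
  have hy2' : y ^ 2 - 1 ≠ 0 := sub_ne_zero.mpr hy2
  have h2 : y - 1 ≠ 0 := by
    intro h
    apply hy2'
    have : y = 1 := by linear_combination h
    simp [this]
  have key : y - 1 / y = (y ^ 2 - 1) / y := by field_simp
  rw [Mop, key]
  field_simp
  ring

lemma skeinOmega_inv {K : Type*} [Field K] (s x : K) (hx : x ≠ 0) (hs : s ≠ 0)
    (h1 : x ^ 2 - 1 ≠ 0) (h2 : x - s ≠ 0) :
    skeinOmega s (1 / x) = x * (x + s) / (s * (x ^ 2 - 1) * (x - s)) := by
  have r1 : (1 : K) - (1 / x) ^ 2 = (x ^ 2 - 1) / x ^ 2 := by field_simp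
  have r2 : (1 : K) - s * (1 / x) = (x - s) / x := by field_simp
  have d1 : (1 : K) - (1 / x) ^ 2 ≠ 0 := by
    rw [r1]; exact div_ne_zero h1 (pow_ne_zero 2 hx)
  have d2 : (1 : K) - s * (1 / x) ≠ 0 := by
    rw [r2]; exact div_ne_zero h2 hx
  rw [skeinOmega]
  rw [div_eq_div_iff (by exact mul_ne_zero (mul_ne_zero hs d1) d2)
      (mul_ne_zero (mul_ne_zero hs h1) h2)]
  field_simp

theorem stmt_10 {K : Type*} [Field K] (s q x : K) (hs : s ≠ 0) (hsq : s ^ 2 = q)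
    (hx : x ≠ 0) (h1 : x ^ 2 ≠ 1) (h2 : (s * x) ^ 2 ≠ 1) (h3 : (x / s) ^ 2 ≠ 1)
    (h4 : x ≠ s) (h5 : s * x ≠ 1) (f : K → K) :
    skeinOmega s x * (f (q * x) - f x) + skeinOmega s (1 / x) * (f (x / q) - f x)
      = -s⁻¹ * ((Mop s f (s * x) - Mop s f (x / s)) / (x - 1 / x)) := by
  subst hsq
  rw [Mop_eq s f (s * x) (mul_ne_zero hs hx) h2,
      Mop_eq s f (x / s) (div_ne_zero hx hs) h3]
  have ha : s * x / s = x := by field_simp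
  have hb : s * (x / s) = x := by field_simp
  have hc : s * (s * x) = s ^ 2 * x := by ring
  have hd : x / s / s = x / s ^ 2 := by ring
  rw [ha, hb, hc, hd, skeinOmega_inv s x hx hs (sub_ne_zero.mpr h1) (sub_ne_zero.mpr h4)]
  simp only [skeinOmega]
  have e1 : (1 : K) - x ^ 2 ≠ 0 := fun h => h1 (by linear_combination -h)
  have e1' : x ^ 2 - 1 ≠ 0 := sub_ne_zero.mpr h1
  have e4 : (1 : K) - s * x ≠ 0 := fun h => h5 (by linear_combination -h)
  have e4' : s * x - 1 ≠ 0 := fun h => h5 (by linear_combination h)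
  have e5 : x - s ≠ 0 := sub_ne_zero.mpr h4
  have e5' : x / s - 1 ≠ 0 := by
    intro h
    apply e5
    field_simp at h
    linear_combination h
  have key : x - 1 / x = (x ^ 2 - 1) / x := by field_simp
  rw [key]
  have e6 : x * s - 1 ≠ 0 := by rwa [mul_comm]
  have e7 : (1 : K) - x * s ≠ 0 := by rwa [mul_comm]
  field_simp
  ring
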